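/- Let k be a field of characteristic p > 2, V a k-vector space, and n ≥ 2. Then the composite V^{⊗n} → L_n(V) → L̄_n(V), sending a_1⊗⋯⊗a_n to the class of the left-normed graded commutator [[a_1,a_2],…,a_n], factors through the quotient (V⊗V/⟨a⊗b − b⊗a⟩) ⊗ Λ^{n−2}(V) of V^{⊗n}; equivalently, in L̄_n(V) the class of [[a_1,a_2],…,a_n] is symmetric under interchanging a_1 and a_2, and changes sign under interchanging a_i and a_{i+1} for any 3 ≤ i ≤ n−1. -/

import Mathlib

open scoped TensorProduct
open PiTensorProduct

noncomputable section

universe u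

variable (k : Type u) [Field k]

/-- The operator on the `n`-th tensor power of `V` permuting the tensor positions
according to `σ`. -/
def pact (V : Type u) [AddCommGroup V] [Module k V] (n : ℕ) (σ : Equiv.Perm (Fin n)) :
    (⨂[k]^n V) →ₗ[k] (⨂[k]^n V) :=
  (PiTensorProduct.reindex k (fun _ : Fin n => V) σ).toLinearMap

/-- The functorial action of a linear map on the `n`-th tensor power. -/
def tmap {V W : Type u} [AddCommGroup V] [Module k V] [AddCommGroup W] [Module k W]
    (n : ℕ) (f : V →ₗ[k] W) : (⨂[k]^n V) →ₗ[k] (⨂[k]^n W) :=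
  PiTensorProduct.map fun _ => f

/-- Auxiliary operators: `betaAux k V n c j` is the operator on `V^{⊗n}` applying the
(signed, with signs `c`) left-normed bracketing to the first `j+1` tensor factors. -/
def betaAux (V : Type u) [AddCommGroup V] [Module k V] (n : ℕ) (c : ℕ → k) :
    ℕ → ((⨂[k]^n V) →ₗ[k] (⨂[k]^n V))
  | 0 => LinearMap.id
  | j + 1 =>
    if h : j + 1 < n then
      (LinearMap.id - c (j + 1) • pact k V n (Fin.cycleRange ⟨j + 1, h⟩)) ∘ₗ
        betaAux V n c j
    else betaAux V n c j

/-- The graded `β_n : V^{⊗n} → V^{⊗n}`: the linear map sending `a₁ ⊗ ⋯ ⊗ a_n` to the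
left-normed iterated graded commutator `[[a₁,a₂],…,a_n]` (elements of `V` having odd
degree `1`, so that `[u, a] = u·a - (-1)^{deg u} a·u`), regarded inside `V^{⊗n}`. -/
def betaG (V : Type u) [AddCommGroup V] [Module k V] (n : ℕ) :
    (⨂[k]^n V) →ₗ[k] (⨂[k]^n V) :=
  betaAux k V n (fun j => (-1 : k) ^ j) (n - 1)

/-- `L_n(V) ⊆ V^{⊗n}`, the span of the left-normed graded commutators on elements
of `V`, i.e. the image of the graded `β_n`. -/
def LsubG (V : Type u) [AddCommGroup V] [Module k V] (n : ℕ) : Submodule k (⨂[k]^n V) :=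
  LinearMap.range (betaG k V n)

variable (V : Type u) [AddCommGroup V] [Module k V]

/-- The operator bracketing the first `i` tensor factors (graded signs). -/
def bfirst (n i : ℕ) : (⨂[k]^n V) →ₗ[k] (⨂[k]^n V) :=
  betaAux k V n (fun j => (-1 : k) ^ j) (i - 1)

/-- The operator bracketing the last `j` tensor factors (graded signs). -/
def blast (n j : ℕ) : (⨂[k]^n V) →ₗ[k] (⨂[k]^n V) :=
  pact k V n ((finRotate n) ^ (n - j)) ∘ₗ bfirst k V n j ∘ₗ
    pact k V n (((finRotate n) ^ (n - j))⁻¹)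

/-- The operator `x ⊗ y ↦ [β_i(x), β_{n-i}(y)]` on `V^{⊗n}` (`x` of length `i`, `y` of
length `n-i`), using the graded commutator of elements of degrees `i` and `n-i`:
its image is `[L_i(V), L_{n-i}(V)] ⊆ L_n(V)`. -/
def bracketPair (n i : ℕ) : (⨂[k]^n V) →ₗ[k] (⨂[k]^n V) :=
  (LinearMap.id - ((-1 : k) ^ (i * (n - i))) • pact k V n (((finRotate n) ^ i)⁻¹)) ∘ₗ
    bfirst k V n i ∘ₗ blast k V n (n - i)

/-- `Σ_{i=2}^{n-2} [L_i(V), L_{n-i}(V)] ⊆ L_n(V)`. -/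
def relBr (n : ℕ) : Submodule k (⨂[k]^n V) :=
  ⨆ i ∈ Finset.Icc 2 (n - 2), LinearMap.range (bracketPair k V n i)

/-- `L̄_n(V) = L_n(V) / Σ_{i=2}^{n-2} [L_i(V), L_{n-i}(V)]`. -/
abbrev LbarG (n : ℕ) : Type u :=
  ↥(LsubG k V n) ⧸ Submodule.comap (LsubG k V n).subtype (relBr k V n)

/-- The composite `V^{⊗n} → L_n(V) → L̄_n(V)` sending `a₁ ⊗ ⋯ ⊗ a_n` to the class of the
left-normed graded commutator `[[a₁,a₂],…,a_n]`. -/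
def QclassG (n : ℕ) : (⨂[k]^n V) → LbarG k V n := fun z =>
  Submodule.Quotient.mk ⟨betaG k V n z, LinearMap.mem_range_self _ z⟩

/-!
Write the left-normed graded bracket `β_n` as a product `s_{n-1} ⋯ s_1` of operators on
`V^{⊗n}`, where `s_j = 1 - (-1)^j σ_j` and the slot permutation `σ_j` moves slot `j` in
front of slots `0, …, j-1`.  Since `s_1 = 1 + τ` for the transposition `τ` of the first two
slots and `τ² = 1`, `β_n τ = β_n`.  For the second claim, the graded Jacobi identity
`[[x, y], c] = [x, [y, c]] + (-1)^{|y|} [[x, c], y]` (for `c ∈ V`), which becomes an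
identity between such operators after three relations between block permutations, gives
`[[x, b₁], b₂] + [[x, b₂], b₁] = [x, [b₁, b₂]] ∈ [L_{i-1}, L_2]`; iterating it shows that
bracketing an element of `[L_a, L_b]` with further elements of `V` stays inside
`Σ [L_i, L_{n-i}]`.
-/

namespace LeftNormed

open Equiv

def cycleRangeAtFun (a j x : ℕ) : ℕ :=
  if x < a then x else if x < a + j then x + 1 else if x = a + j then a else x

def cycleRangeAtInvFun (a j x : ℕ) : ℕ :=
  if x < a then x else if x = a then a + j else if x ≤ a + j then x - 1 else x

def blockSwapFun (a b x : ℕ) : ℕ :=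
  if x < a then x + b else if x < a + b then x - a else x

/-- `Fin.cycleRange` translated by `a`: it sends `a + i ↦ a + i + 1` for `i < j` and
`a + j ↦ a`, so on `V^{⊗n}` it moves the factor in slot `a + j` in front of the block of
slots `[a, a + j)`.  It is the identity when `a + j ≥ n`. -/
def cycleRangeAt (n a j : ℕ) : Perm (Fin n) :=
  if h : a + j < n then
    { toFun := fun x => ⟨cycleRangeAtFun a j x, by unfold cycleRangeAtFun; split_ifs <;> omega⟩
      invFun := fun x => ⟨cycleRangeAtInvFun a j x,
        by unfold cycleRangeAtInvFun; split_ifs <;> omega⟩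
      left_inv := fun x => Fin.ext <| by
        simp only [cycleRangeAtFun, cycleRangeAtInvFun]; split_ifs <;> omega
      right_inv := fun x => Fin.ext <| by
        simp only [cycleRangeAtFun, cycleRangeAtInvFun]; split_ifs <;> omega }
  else 1

/-- On `V^{⊗n}` this exchanges the blocks of slots `[0, a)` and `[a, a + b)`:
`u ⊗ w ⊗ r ↦ w ⊗ u ⊗ r`.  It is the identity when `a + b > n`. -/
def blockSwap (n a b : ℕ) : Perm (Fin n) :=
  if h : a + b ≤ n then
    { toFun := fun x => ⟨blockSwapFun a b x, by unfold blockSwapFun; split_ifs <;> omega⟩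
      invFun := fun x => ⟨blockSwapFun b a x, by unfold blockSwapFun; split_ifs <;> omega⟩
      left_inv := fun x => Fin.ext <| by simp only [blockSwapFun]; split_ifs <;> omega
      right_inv := fun x => Fin.ext <| by simp only [blockSwapFun]; split_ifs <;> omega }
  else 1

variable {n a b c j m : ℕ}

theorem val_cycleRangeAt (h : a + j < n) (x : Fin n) :
    (cycleRangeAt n a j x : ℕ) = cycleRangeAtFun a j x := by
  simp [cycleRangeAt, h]

theorem val_blockSwap (h : a + b ≤ n) (x : Fin n) :
    (blockSwap n a b x : ℕ) = blockSwapFun a b x := by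
  simp [blockSwap, h]

theorem val_finRotate_pow (a : ℕ) (x : Fin n) : ((finRotate n ^ a) x : ℕ) = (x + a) % n := by
  induction a with
  | zero => simp [Nat.mod_eq_of_lt x.2]
  | succ a ih =>
    have := x.neZero
    rw [pow_succ', Perm.mul_apply, finRotate_apply, Fin.val_add, ih, Fin.val_one', Nat.add_mod_mod,
      Nat.mod_add_mod, Nat.add_assoc]

theorem cycleRange_eq_cycleRangeAt (h : j < n) :
    Fin.cycleRange (⟨j, h⟩ : Fin n) = cycleRangeAt n 0 j := by
  obtain ⟨m, rfl⟩ : ∃ m, n = m + 1 := ⟨n - 1, by omega⟩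
  ext x
  rw [val_cycleRangeAt (by omega)]
  rcases lt_trichotomy x.1 j with hx | hx | hx
  · rw [Fin.cycleRange_of_lt (by simpa [Fin.lt_def] using hx),
      Fin.val_add_one_of_lt (by simp [Fin.lt_def]; omega)]
    simp only [cycleRangeAtFun]; split_ifs <;> omega
  · rw [Fin.cycleRange_of_eq (by simp [Fin.ext_iff, hx])]
    simp only [cycleRangeAtFun]; split_ifs <;> simp_all
  · rw [Fin.cycleRange_of_gt (by simpa [Fin.lt_def] using hx)]
    simp only [cycleRangeAtFun]; split_ifs <;> omega

theorem swap_eq_cycleRangeAt (x y : Fin n) (hxy : (y : ℕ) = x + 1) :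
    swap x y = cycleRangeAt n x 1 := by
  ext z
  rw [val_cycleRangeAt (by omega)]
  rcases eq_or_ne z x with rfl | hzx
  · simp [cycleRangeAtFun, hxy]
  rcases eq_or_ne z y with rfl | hzy
  · simp [cycleRangeAtFun, hxy]
  rw [swap_apply_of_ne_of_ne hzx hzy]
  rw [Ne, Fin.ext_iff] at hzx hzy
  simp only [cycleRangeAtFun]; split_ifs <;> omega

theorem blockSwap_one (h : a < n) : blockSwap n a 1 = cycleRangeAt n 0 a := by
  ext x
  rw [val_blockSwap h, val_cycleRangeAt (by omega)]
  simp only [blockSwapFun, cycleRangeAtFun]; split_ifs <;> omega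

theorem cycleRangeAt_zero_mul (h : a + b < n) :
    cycleRangeAt n 0 a * cycleRangeAt n a b = cycleRangeAt n 0 (a + b) := by
  ext x
  simp only [Perm.mul_apply, val_cycleRangeAt h, val_cycleRangeAt (show 0 + a < n by omega),
    val_cycleRangeAt (show 0 + (a + b) < n by omega)]
  simp only [cycleRangeAtFun]; split_ifs <;> omega

theorem semiconjBy_cycleRangeAt_shift (h : a + b < n) (hj : j < b) :
    SemiconjBy (cycleRangeAt n a b) (cycleRangeAt n a j) (cycleRangeAt n (a + 1) j) := by
  ext x
  simp only [Perm.mul_apply, val_cycleRangeAt h,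
    val_cycleRangeAt (show a + 1 + j < n by omega), val_cycleRangeAt (show a + j < n by omega)]
  simp only [cycleRangeAtFun]; split_ifs <;> omega

theorem semiconjBy_cycleRangeAt_zero_shift (h : a + b < n) (hj : j < b) :
    SemiconjBy (cycleRangeAt n 0 (a + b)) (cycleRangeAt n a j) (cycleRangeAt n (a + 1) j) := by
  ext x
  simp only [Perm.mul_apply, val_cycleRangeAt (show 0 + (a + b) < n by omega),
    val_cycleRangeAt (show a + 1 + j < n by omega), val_cycleRangeAt (show a + j < n by omega)]
  simp only [cycleRangeAtFun]; split_ifs <;> omega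

theorem commute_cycleRangeAt_of_lt {a' j' : ℕ} (h : a + j < a') :
    Commute (cycleRangeAt n a j) (cycleRangeAt n a' j') := by
  by_cases h' : a' + j' < n
  · ext x
    simp only [Perm.mul_apply, val_cycleRangeAt h',
      val_cycleRangeAt (show a + j < n by omega)]
    simp only [cycleRangeAtFun]; split_ifs <;> omega
  · simp [cycleRangeAt, h']

theorem add_mod_eq_ite_of_le {x : ℕ} (hx : x < n) (ha : a ≤ n) :
    (x + a) % n = if x + a < n then x + a else x + a - n := by
  split_ifs with hlt
  · exact Nat.mod_eq_of_lt hlt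
  · rw [Nat.mod_eq_sub_mod (by omega), Nat.mod_eq_of_lt (by omega)]

theorem semiconjBy_finRotate_pow (h : a + j < n) :
    SemiconjBy (finRotate n ^ a) (cycleRangeAt n 0 j) (cycleRangeAt n a j) := by
  ext x
  simp only [Perm.mul_apply, val_finRotate_pow,
    val_cycleRangeAt (show 0 + j < n by omega), val_cycleRangeAt h]
  rw [add_mod_eq_ite_of_le x.2 (by omega),
    add_mod_eq_ite_of_le (by unfold cycleRangeAtFun; split_ifs <;> omega) (by omega)]
  simp only [cycleRangeAtFun]; split_ifs <;> omega

theorem blockSwap_eq_inv_finRotate_pow (h : a + b = n) :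
    blockSwap n a b = (finRotate n ^ a)⁻¹ := by
  rw [eq_inv_iff_mul_eq_one]
  ext x
  simp only [Perm.mul_apply, val_blockSwap h.le, Perm.one_apply, val_finRotate_pow]
  rw [add_mod_eq_ite_of_le x.2 (by omega)]
  simp only [blockSwapFun]; split_ifs <;> omega

theorem blockSwap_mul_cycleRangeAt (h : a + b < n) :
    blockSwap n a (b + 1) * cycleRangeAt n a b = cycleRangeAt n 0 (a + b) * blockSwap n a b := by
  ext x
  simp only [Perm.mul_apply, val_cycleRangeAt h, val_cycleRangeAt (show 0 + (a + b) < n by omega),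
    val_blockSwap (show a + (b + 1) ≤ n by omega), val_blockSwap h.le]
  simp only [cycleRangeAtFun, blockSwapFun]; split_ifs <;> omega

theorem blockSwap_succ_mul_cycleRangeAt (h : a + b < n) :
    blockSwap n (a + 1) b * cycleRangeAt n a b = blockSwap n a b := by
  ext x
  simp only [Perm.mul_apply, val_cycleRangeAt h, val_blockSwap (show a + 1 + b ≤ n by omega),
    val_blockSwap h.le]
  simp only [cycleRangeAtFun, blockSwapFun]; split_ifs <;> omega

theorem blockSwap_succ_mul_cycleRangeAt_zero (h : a + b < n) (hb : 1 ≤ b) :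
    blockSwap n (a + 1) b * cycleRangeAt n 0 (a + b) = blockSwap n a (b + 1) := by
  ext x
  simp only [Perm.mul_apply, val_cycleRangeAt (show 0 + (a + b) < n by omega),
    val_blockSwap (show a + 1 + b ≤ n by omega), val_blockSwap (show a + (b + 1) ≤ n by omega)]
  simp only [cycleRangeAtFun, blockSwapFun]; split_ifs <;> omega

theorem cycleRangeAt_one_mul_self (h : a + 1 < n) :
    cycleRangeAt n a 1 * cycleRangeAt n a 1 = 1 := by
  rw [← swap_eq_cycleRangeAt ⟨a, by omega⟩ ⟨a + 1, h⟩ rfl, swap_mul_self]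

/-- The graded Jacobi identity `[[x, y], c] = [x, [y, c]] + t [[x, c], y]` for `c` of degree
one, with `s = (-1)^{|x|}`, `t = (-1)^{|y|}`: `Z` and `P` move `c` in front of `x ⊗ y` and of
`y`, and `S`, `S'`, `S''` swap the blocks `x | y`, `x | y ⊗ c` and `x ⊗ c | y`. -/
theorem jacobi_expansion {K A : Type*} [CommRing K] [Ring A] [Algebra K A] (s t v : K)
    {Z P S S' S'' : A} (h₁ : S' * P = Z * S) (h₂ : S'' * P = S) (h₃ : S'' * Z = S') :
    (1 - (s * t) • Z) * (1 - (t * v) • S) =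
      (1 - (t * v * s) • S') * (1 - t • P) + t • ((1 - v • S'') * (P - s • Z)) := by
  simp only [mul_sub, sub_mul, one_mul, mul_one, smul_mul_assoc, mul_smul_comm,
    h₁, h₂, h₃]
  module

variable {k V}

theorem pact_mul (σ τ : Perm (Fin n)) : pact k V n (σ * τ) = pact k V n σ * pact k V n τ :=
  LinearMap.ext fun x => (PiTensorProduct.reindex_reindex τ σ x).symm

theorem pact_one : pact k V n 1 = 1 :=
  LinearMap.ext fun x => by simp [pact, Perm.one_def, PiTensorProduct.reindex_refl]

theorem semiconjBy_pact {σ τ τ' : Perm (Fin n)} (h : SemiconjBy σ τ τ') :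
    SemiconjBy (pact k V n σ) (pact k V n τ) (pact k V n τ') := by
  rw [SemiconjBy, ← pact_mul, ← pact_mul, h.eq]

theorem tprod_comp_swap (f : Fin n → V) (x y : Fin n) (hxy : (y : ℕ) = x + 1) :
    (tprod k fun t => f (swap x y t)) = pact k V n (cycleRangeAt n x 1) (tprod k f) := by
  rw [← swap_eq_cycleRangeAt x y hxy, pact, LinearEquiv.coe_coe, reindex_tprod, symm_swap]

variable (k V n) in
/-- `u ⊗ x ↦ [u, x] = u ⊗ x - (-1)^j x ⊗ u`, for `u` in the slots `[a, a + j)` and `x` in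
slot `a + j`. -/
def bracketStep (a j : ℕ) : Module.End k (⨂[k]^n V) :=
  1 - ((-1 : k) ^ j) • pact k V n (cycleRangeAt n a j)

variable (k V n) in
def bracketRun (a m : ℕ) : ℕ → Module.End k (⨂[k]^n V)
  | 0 => 1
  | d + 1 => bracketStep k V n a (m + d) * bracketRun a m d

variable (k V n) in
/-- The left-normed bracketing of the slots `[a, a + b)`. -/
def bracketBlock (a b : ℕ) : Module.End k (⨂[k]^n V) :=
  bracketRun k V n a 1 (b - 1)

variable (k V n) in
/-- `u ⊗ w ↦ [β_a u, β_b w]`, for `u` in the slots `[0, a)` and `w` in `[a, a + b)`. -/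
def bracketOfBlocks (a b : ℕ) : Module.End k (⨂[k]^n V) :=
  (1 - ((-1 : k) ^ (a * b)) • pact k V n (blockSwap n a b)) * bracketBlock k V n a b *
    bracketBlock k V n 0 a

theorem semiconjBy_bracketRun {X : Module.End k (⨂[k]^n V)} {a a' m d : ℕ}
    (h : ∀ j, m ≤ j → j < m + d →
      SemiconjBy X (pact k V n (cycleRangeAt n a j)) (pact k V n (cycleRangeAt n a' j))) :
    SemiconjBy X (bracketRun k V n a m d) (bracketRun k V n a' m d) := by
  induction d with
  | zero => exact SemiconjBy.one_right X
  | succ d ih =>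
    have hstep := (SemiconjBy.one_right X).sub_right ((h (m + d) (by omega) (by omega)).smul_right
      ((-1 : k) ^ (m + d)))
    exact hstep.mul_right (ih fun j h₁ h₂ => h j h₁ (by omega))

theorem semiconjBy_bracketBlock {X : Module.End k (⨂[k]^n V)} {a a' : ℕ}
    (h : ∀ j, 1 ≤ j → j < b →
      SemiconjBy X (pact k V n (cycleRangeAt n a j)) (pact k V n (cycleRangeAt n a' j))) :
    SemiconjBy X (bracketBlock k V n a b) (bracketBlock k V n a' b) :=
  semiconjBy_bracketRun fun j h₁ h₂ => h j h₁ (by omega)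

theorem bracketRun_add (a m d e : ℕ) :
    bracketRun k V n a m (d + e) = bracketRun k V n a (m + d) e * bracketRun k V n a m d := by
  induction e with
  | zero => rw [add_zero, bracketRun, one_mul]
  | succ e ih => rw [← add_assoc, bracketRun, ih, bracketRun, mul_assoc, add_assoc]

theorem bracketRun_succ (a m d : ℕ) :
    bracketRun k V n a m (d + 1) = bracketRun k V n a (m + 1) d * bracketStep k V n a m := by
  rw [add_comm, bracketRun_add, bracketRun, bracketRun, add_zero, mul_one]

theorem bracketBlock_succ (a : ℕ) (hb : 1 ≤ b) :
    bracketBlock k V n a (b + 1) = bracketStep k V n a b * bracketBlock k V n a b := by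
  obtain ⟨c, rfl⟩ : ∃ c, b = c + 1 := ⟨b - 1, by omega⟩
  simp only [bracketBlock, Nat.add_sub_cancel, bracketRun, add_comm 1 c]

theorem bracketBlock_one (a : ℕ) : bracketBlock k V n a 1 = 1 := rfl

theorem bracketBlock_two (a : ℕ) :
    bracketBlock k V n a 2 = 1 + pact k V n (cycleRangeAt n a 1) := by
  rw [bracketBlock_succ a le_rfl, bracketBlock_one, mul_one, bracketStep, pow_one]
  module

theorem commute_bracketBlock_zero (hc : c ≤ a) :
    Commute (bracketBlock k V n 0 c) (bracketBlock k V n a b) :=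
  semiconjBy_bracketBlock fun _ _ _ => Commute.symm <| semiconjBy_bracketBlock fun _ _ hi =>
    semiconjBy_pact (commute_cycleRangeAt_of_lt (by omega)).symm

theorem betaAux_eq_bracketBlock :
    ∀ j, j < n → betaAux k V n (fun t => (-1 : k) ^ t) j = bracketBlock k V n 0 (j + 1)
  | 0, _ => rfl
  | j + 1, h => by
    rw [betaAux, dif_pos h, betaAux_eq_bracketBlock j (by omega),
      bracketBlock_succ (b := j + 1) 0 (by omega),
      cycleRange_eq_cycleRangeAt h]
    rfl

theorem bfirst_eq_bracketBlock (hm : 1 ≤ m) (hmn : m ≤ n) :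
    bfirst k V n m = bracketBlock k V n 0 m := by
  rw [bfirst, betaAux_eq_bracketBlock _ (by omega), Nat.sub_add_cancel hm]

theorem betaG_eq_bracketRun_mul (hm : 1 ≤ m) (hmn : m ≤ n) :
    betaG k V n = bracketRun k V n 0 m (n - m) * bracketBlock k V n 0 m := by
  have hsplit := bracketRun_add (k := k) (V := V) (n := n) 0 1 (m - 1) (n - m)
  rw [Nat.add_sub_cancel' hm, show m - 1 + (n - m) = n - 1 by omega] at hsplit
  rw [show betaG k V n = bfirst k V n n from rfl, bfirst_eq_bracketBlock (by omega) le_rfl,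
    bracketBlock, bracketBlock, hsplit]

theorem blast_eq_bracketBlock (h : a + b = n) (hb : 1 ≤ b) :
    blast k V n b = bracketBlock k V n a b := by
  have hconj : SemiconjBy (pact k V n (finRotate n ^ a)) (bracketBlock k V n 0 b)
      (bracketBlock k V n a b) :=
    semiconjBy_bracketBlock fun _ _ hj => semiconjBy_pact (semiconjBy_finRotate_pow (by omega))
  rw [blast, show n - b = a by omega, bfirst_eq_bracketBlock hb (by omega)]
  change pact k V n (finRotate n ^ a) * bracketBlock k V n 0 b *
    pact k V n (finRotate n ^ a)⁻¹ = _
  rw [hconj.eq, mul_assoc, ← pact_mul, mul_inv_cancel, pact_one, mul_one]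

theorem bracketPair_eq_bracketOfBlocks (h : a + b = n) (ha : 1 ≤ a) (hb : 1 ≤ b) :
    bracketPair k V n a = bracketOfBlocks k V n a b := by
  rw [bracketPair, show n - a = b by omega, blast_eq_bracketBlock h hb,
    bfirst_eq_bracketBlock ha (by omega), ← blockSwap_eq_inv_finRotate_pow h]
  change (1 - _) * bracketBlock k V n 0 a * bracketBlock k V n a b = _
  rw [bracketOfBlocks, mul_assoc, (commute_bracketBlock_zero le_rfl).eq, mul_assoc]

theorem bracketOfBlocks_one (ha : 1 ≤ a) (h : a < n) :
    bracketOfBlocks k V n a 1 = bracketBlock k V n 0 (a + 1) := by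
  rw [bracketOfBlocks, bracketBlock_succ 0 ha, bracketBlock_one, mul_one, mul_one, blockSwap_one h]
  rfl

theorem bracketStep_mul_bracketOfBlocks (ha : 1 ≤ a) (hb : 1 ≤ b) (h : a + b < n) :
    bracketStep k V n 0 (a + b) * bracketOfBlocks k V n a b =
      bracketOfBlocks k V n a (b + 1) +
        (-1 : k) ^ b • (bracketOfBlocks k V n (a + 1) b * pact k V n (cycleRangeAt n a b)) := by
  set P := pact k V n (cycleRangeAt n a b)
  set Z := pact k V n (cycleRangeAt n 0 (a + b))
  set Y := bracketBlock k V n a b * bracketBlock k V n 0 a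
  set s : k := (-1) ^ a
  set t : k := (-1) ^ b
  set v : k := (-1) ^ ((a + 1) * b)
  -- `[x, c] ⊗ y` is computed after moving `c` from slot `a + b` to slot `a`
  have hmove : bracketBlock k V n (a + 1) b * bracketBlock k V n 0 (a + 1) * P =
      (P - s • Z) * Y := by
    have hP : SemiconjBy P (bracketBlock k V n a b) (bracketBlock k V n (a + 1) b) :=
      semiconjBy_bracketBlock fun _ _ hj => semiconjBy_pact (semiconjBy_cycleRangeAt_shift h hj)
    have hZ : SemiconjBy Z (bracketBlock k V n a b) (bracketBlock k V n (a + 1) b) :=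
      semiconjBy_bracketBlock fun _ _ hj =>
        semiconjBy_pact (semiconjBy_cycleRangeAt_zero_shift h hj)
    have hP₀ : Commute P (bracketBlock k V n 0 a) :=
      semiconjBy_bracketBlock fun _ _ hj =>
        semiconjBy_pact (commute_cycleRangeAt_of_lt (by omega)).symm
    have hstep : bracketStep k V n 0 a * P = P - s • Z := by
      rw [bracketStep, sub_mul, one_mul, smul_mul_assoc, ← pact_mul, cycleRangeAt_zero_mul h]
    rw [bracketBlock_succ 0 ha, mul_assoc, mul_assoc, ← hP₀.eq, ← mul_assoc _ P, hstep,
      ← mul_assoc, mul_sub, mul_smul_comm, ← hP.eq, ← hZ.eq, ← smul_mul_assoc, ← sub_mul,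
      mul_assoc]
  have hst : (-1 : k) ^ (a + b) = s * t := pow_add _ _ _
  have htv : (-1 : k) ^ (a * b) = t * v := by
    rw [← pow_add, show b + (a + 1) * b = a * b + 2 * b by ring, pow_add, pow_mul]
    simp
  have htvs : (-1 : k) ^ (a * (b + 1)) = t * v * s := by rw [mul_add_one, pow_add, htv]
  calc bracketStep k V n 0 (a + b) * bracketOfBlocks k V n a b
      = (1 - (s * t) • Z) * (1 - (t * v) • pact k V n (blockSwap n a b)) * Y := by
        rw [bracketStep, hst, bracketOfBlocks, htv, mul_assoc _ _ (bracketBlock k V n 0 a),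
          mul_assoc]
    _ = ((1 - (t * v * s) • pact k V n (blockSwap n a (b + 1))) * (1 - t • P) +
          t • ((1 - v • pact k V n (blockSwap n (a + 1) b)) * (P - s • Z))) * Y := by
        rw [jacobi_expansion s t v]
        · rw [← pact_mul, ← pact_mul, blockSwap_mul_cycleRangeAt h]
        · rw [← pact_mul, blockSwap_succ_mul_cycleRangeAt h]
        · rw [← pact_mul, blockSwap_succ_mul_cycleRangeAt_zero h hb]
    _ = _ := by
        rw [add_mul, smul_mul_assoc, mul_assoc (1 - v • _), ← hmove, bracketOfBlocks,
          bracketOfBlocks, bracketBlock_succ a hb, htvs, bracketStep]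
        simp only [mul_assoc]
        rfl

theorem range_bracketPair_le_relBr (ha : 2 ≤ a) (han : a ≤ n - 2) :
    LinearMap.range (bracketPair k V n a) ≤ relBr k V n :=
  le_iSup₂_of_le (f := fun i _ => LinearMap.range (bracketPair k V n i)) a
    (Finset.mem_Icc.mpr ⟨ha, han⟩) le_rfl

theorem range_bracketRun_mul_bracketOfBlocks_le {d : ℕ} (ha : 2 ≤ a) (hb : 2 ≤ b)
    (habn : a + b + d = n) :
    LinearMap.range (bracketRun k V n 0 (a + b) d * bracketOfBlocks k V n a b) ≤
      relBr k V n := by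
  induction d generalizing a b with
  | zero =>
    rw [bracketRun, one_mul,
      ← bracketPair_eq_bracketOfBlocks (show a + b = n by omega) (by omega) (by omega)]
    exact range_bracketPair_le_relBr ha (by omega)
  | succ d ih =>
    rintro _ ⟨z, rfl⟩
    rw [bracketRun_succ, mul_assoc, bracketStep_mul_bracketOfBlocks (by omega) (by omega)
      (by omega), mul_add, mul_smul_comm, LinearMap.add_apply, LinearMap.smul_apply]
    refine add_mem (ih (b := b + 1) ha (by omega) (by omega) ⟨z, rfl⟩) (Submodule.smul_mem _ _ ?_)
    rw [← mul_assoc, Module.End.mul_apply, show a + b + 1 = a + 1 + b by omega]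
    exact ih (a := a + 1) (by omega) hb (by omega) ⟨_, rfl⟩

theorem betaG_pact_cycleRangeAt_zero_one (hn : 2 ≤ n) (z : ⨂[k]^n V) :
    betaG k V n (pact k V n (cycleRangeAt n 0 1) z) = betaG k V n z := by
  rw [← Module.End.mul_apply, betaG_eq_bracketRun_mul (by omega) hn, mul_assoc, bracketBlock_two,
    add_mul, one_mul, ← pact_mul, cycleRangeAt_one_mul_self (by omega), pact_one, add_comm]

theorem betaG_pact_cycleRangeAt_one_add_mem (ha : 2 ≤ a) (h : a + 2 ≤ n) (z : ⨂[k]^n V) :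
    betaG k V n (pact k V n (cycleRangeAt n a 1) z) + betaG k V n z ∈ relBr k V n := by
  set P := pact k V n (cycleRangeAt n a 1)
  have hjacobi : bracketBlock k V n 0 (a + 2) =
      bracketOfBlocks k V n a 2 + (-1 : k) ^ 1 • (bracketBlock k V n 0 (a + 2) * P) := by
    have h := bracketStep_mul_bracketOfBlocks (k := k) (V := V) (b := 1) (by omega) le_rfl
      (show a + 1 < n by omega)
    rwa [bracketOfBlocks_one (by omega) (by omega), bracketOfBlocks_one (by omega) (by omega),
      ← bracketBlock_succ 0 (by omega)] at h
  have hswap : bracketBlock k V n 0 (a + 2) * (P + 1) = bracketOfBlocks k V n a 2 := by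
    rw [mul_add_one]
    nth_rw 2 [hjacobi]
    module
  rw [← Module.End.mul_apply, ← LinearMap.add_apply, ← mul_add_one,
    betaG_eq_bracketRun_mul (m := a + 2) (by omega) h, mul_assoc, hswap]
  exact range_bracketRun_mul_bracketOfBlocks_le ha le_rfl (by omega) ⟨z, rfl⟩

theorem QclassG_eq_of_betaG_eq {x y : ⨂[k]^n V} (h : betaG k V n x = betaG k V n y) :
    QclassG k V n x = QclassG k V n y :=
  congrArg Submodule.Quotient.mk (Subtype.ext h)

theorem QclassG_eq_neg_of_betaG_add_mem {x y : ⨂[k]^n V}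
    (h : betaG k V n x + betaG k V n y ∈ relBr k V n) : QclassG k V n x = -QclassG k V n y := by
  rw [eq_neg_iff_add_eq_zero, QclassG, QclassG, ← Submodule.Quotient.mk_add,
    Submodule.Quotient.mk_eq_zero]
  exact h

end LeftNormed

open LeftNormed in
theorem statement10 (k : Type u) [Field k]
    (V : Type u) [AddCommGroup V] [Module k V] (n : ℕ) (hn : 2 ≤ n) :
    (∀ a : Fin n → V,
      QclassG k V n (tprod k fun t =>
          a (Equiv.swap (⟨0, by omega⟩ : Fin n) (⟨1, by omega⟩ : Fin n) t))
        = QclassG k V n (tprod k a)) ∧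
    (∀ a : Fin n → V, ∀ (i : ℕ) (h3 : 3 ≤ i) (hi : i ≤ n - 1),
      QclassG k V n (tprod k fun t =>
          a (Equiv.swap (⟨i - 1, by omega⟩ : Fin n) (⟨i, by omega⟩ : Fin n) t))
        = - QclassG k V n (tprod k a)) := by
  refine ⟨fun a => ?_, fun a i h3 hi => ?_⟩
  · rw [tprod_comp_swap a _ _ rfl]
    exact QclassG_eq_of_betaG_eq (betaG_pact_cycleRangeAt_zero_one hn _)
  · rw [tprod_comp_swap a _ _ (by simp only; omega)]
    exact QclassG_eq_neg_of_betaG_add_mem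
      (betaG_pact_cycleRangeAt_one_add_mem (by simp only; omega) (by simp only; omega) _)

end
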